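/- arXiv:math-ph/0512084 — 2 statements merged into one kernel-verified Lean document; each statement's English description precedes it below -/
import Mathlib

section
/- The six functions J₀₁, J₀₂, J₀₃, J₁₂, J₁₃, J₂₃ of the geodesic polar realization satisfy, at every point of D, the commutation relations of the Lie algebra so_{κ₁,κ₂}(4) with respect to the canonical Poisson bracket: {J₁₂,J₁₃} = κ₂J₂₃, {J₁₂,J₂₃} = −J₁₃, {J₁₃,J₂₃} = J₁₂, {J₁₂,J₀₁} = J₀₂, {J₁₃,J₀₁} = J₀₃, {J₂₃,J₀₂} = J₀₃, {J₁₂,J₀₂} = −κ₂J₀₁, {J₁₃,J₀₃} = −κ₂J₀₁, {J₂₃,J₀₃} = −J₀₂, {J₀₁,J₀₂} = κ₁J₁₂, {J₀₁,J₀₃} = κ₁J₁₃, {J₀₂,J₀₃} = κ₁κ₂J₂₃, {J₀₁,J₂₃} = 0, {J₀₂,J₁₃} = 0, {J₀₃,J₁₂} = 0. -/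
namespace Paper
noncomputable section

/-- The κ-dependent cosine Cκ(x) = ∑ (−κ)^l x^{2l}/(2l)!. -/
def Ck (κ x : ℝ) : ℝ := ∑' l : ℕ, (-κ) ^ l * x ^ (2 * l) / (Nat.factorial (2 * l) : ℝ)

/-- The κ-dependent sine Sκ(x) = ∑ (−κ)^l x^{2l+1}/(2l+1)!. -/
def Sk (κ x : ℝ) : ℝ := ∑' l : ℕ, (-κ) ^ l * x ^ (2 * l + 1) / (Nat.factorial (2 * l + 1) : ℝ)

/-- The κ-dependent tangent Tκ(x) = Sκ(x)/Cκ(x). -/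
def Tk (κ x : ℝ) : ℝ := Sk κ x / Ck κ x

/-- Phase space ℝ³ × ℝ³ ≃ ℝ⁶ with canonical coordinates
`(r, θ, φ, p_r, p_θ, p_φ) = (x 0, x 1, x 2, x 3, x 4, x 5)`. -/
abbrev Pt := Fin 6 → ℝ

/-- Partial derivative in the i-th coordinate direction. -/
def pd (f : Pt → ℝ) (i : Fin 6) (x : Pt) : ℝ := fderiv ℝ f x (Pi.single i 1)

/-- Canonical Poisson bracket {f,g} = ∑_{q} (∂f/∂q ∂g/∂p_q − ∂g/∂q ∂f/∂p_q). -/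
def pb (f g : Pt → ℝ) (x : Pt) : ℝ :=
  ∑ i : Fin 3,
    (pd f ⟨i.1, by omega⟩ x * pd g ⟨i.1 + 3, by omega⟩ x
      - pd g ⟨i.1, by omega⟩ x * pd f ⟨i.1 + 3, by omega⟩ x)

/-- Gradient of a function on phase space, as a vector in ℝ⁶. -/
def grad (f : Pt → ℝ) (x : Pt) : Fin 6 → ℝ := fun i => pd f i x

/-- The open domain D where Sκ₁(r), Cκ₁(r), Sκ₂(θ), Cκ₂(θ), cos φ, sin φ are nonzero. -/
def D (κ₁ κ₂ : ℝ) : Set Pt :=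
  {x | Sk κ₁ (x 0) ≠ 0 ∧ Ck κ₁ (x 0) ≠ 0 ∧ Sk κ₂ (x 1) ≠ 0 ∧ Ck κ₂ (x 1) ≠ 0 ∧
       Real.cos (x 2) ≠ 0 ∧ Real.sin (x 2) ≠ 0}

/-- J₀₁ = Cκ₂(θ)p_r − (Sκ₂(θ)/Tκ₁(r))p_θ. -/
def J01 (κ₁ κ₂ : ℝ) (x : Pt) : ℝ :=
  Ck κ₂ (x 1) * x 3 - (Sk κ₂ (x 1) / Tk κ₁ (x 0)) * x 4

/-- J₀₂. -/
def J02 (κ₁ κ₂ : ℝ) (x : Pt) : ℝ :=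
  κ₂ * Sk κ₂ (x 1) * Real.cos (x 2) * x 3
    + (Ck κ₂ (x 1) * Real.cos (x 2) / Tk κ₁ (x 0)) * x 4
    - (Real.sin (x 2) / (Tk κ₁ (x 0) * Sk κ₂ (x 1))) * x 5

/-- J₀₃. -/
def J03 (κ₁ κ₂ : ℝ) (x : Pt) : ℝ :=
  κ₂ * Sk κ₂ (x 1) * Real.sin (x 2) * x 3
    + (Ck κ₂ (x 1) * Real.sin (x 2) / Tk κ₁ (x 0)) * x 4
    + (Real.cos (x 2) / (Tk κ₁ (x 0) * Sk κ₂ (x 1))) * x 5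

/-- J₁₂ = cos φ·p_θ − (sin φ/Tκ₂(θ))p_φ. -/
def J12 (κ₂ : ℝ) (x : Pt) : ℝ :=
  Real.cos (x 2) * x 4 - (Real.sin (x 2) / Tk κ₂ (x 1)) * x 5

/-- J₁₃ = sin φ·p_θ + (cos φ/Tκ₂(θ))p_φ. -/
def J13 (κ₂ : ℝ) (x : Pt) : ℝ :=
  Real.sin (x 2) * x 4 + (Real.cos (x 2) / Tk κ₂ (x 1)) * x 5

/-- J₂₃ = p_φ. -/
def J23 (x : Pt) : ℝ := x 5

/-- Kinetic energy T. -/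
def Tkin (κ₁ κ₂ : ℝ) (x : Pt) : ℝ :=
  (1 / 2) * ((x 3) ^ 2 + (x 4) ^ 2 / (κ₂ * Sk κ₁ (x 0) ^ 2)
    + (x 5) ^ 2 / (κ₂ * Sk κ₁ (x 0) ^ 2 * Sk κ₂ (x 1) ^ 2))

/-- The superintegrable potential U with arbitrary radial function F. -/
def U (κ₁ κ₂ : ℝ) (F : ℝ → ℝ) (β₁ β₂ β₃ : ℝ) (x : Pt) : ℝ :=
  F (x 0) + (1 / Sk κ₁ (x 0) ^ 2) *
    (β₁ / Ck κ₂ (x 1) ^ 2 + β₂ / (Sk κ₂ (x 1) ^ 2 * Real.cos (x 2) ^ 2)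
      + β₃ / (Sk κ₂ (x 1) ^ 2 * Real.sin (x 2) ^ 2))

/-- Integral I₁₂. -/
def I12 (κ₂ β₁ β₂ : ℝ) (x : Pt) : ℝ :=
  (Real.cos (x 2) * x 4 - (Real.sin (x 2) / Tk κ₂ (x 1)) * x 5) ^ 2
    + 2 * β₁ * κ₂ ^ 2 * Tk κ₂ (x 1) ^ 2 * Real.cos (x 2) ^ 2
    + 2 * β₂ * κ₂ / (Tk κ₂ (x 1) ^ 2 * Real.cos (x 2) ^ 2)

/-- Integral I₁₃. -/
def I13 (κ₂ β₁ β₃ : ℝ) (x : Pt) : ℝ :=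
  (Real.sin (x 2) * x 4 + (Real.cos (x 2) / Tk κ₂ (x 1)) * x 5) ^ 2
    + 2 * β₁ * κ₂ ^ 2 * Tk κ₂ (x 1) ^ 2 * Real.sin (x 2) ^ 2
    + 2 * β₃ * κ₂ / (Tk κ₂ (x 1) ^ 2 * Real.sin (x 2) ^ 2)

/-- Integral I₂₃. -/
def I23 (κ₂ β₂ β₃ : ℝ) (x : Pt) : ℝ :=
  (x 5) ^ 2 + 2 * β₂ * κ₂ * Real.tan (x 2) ^ 2 + 2 * β₃ * κ₂ / Real.tan (x 2) ^ 2

/-- Integral I₁₂₃. -/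
def I123 (κ₂ β₁ β₂ β₃ : ℝ) (x : Pt) : ℝ :=
  (x 4) ^ 2 + (x 5) ^ 2 / Sk κ₂ (x 1) ^ 2 + 2 * β₁ * κ₂ / Ck κ₂ (x 1) ^ 2
    + 2 * β₂ * κ₂ / (Sk κ₂ (x 1) ^ 2 * Real.cos (x 2) ^ 2)
    + 2 * β₃ * κ₂ / (Sk κ₂ (x 1) ^ 2 * Real.sin (x 2) ^ 2)

/-- The Smorodinsky–Winternitz Hamiltonian H^SW. -/
def HSW (κ₁ κ₂ β₀ β₁ β₂ β₃ : ℝ) (x : Pt) : ℝ :=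
  Tkin κ₁ κ₂ x + β₀ * Tk κ₁ (x 0) ^ 2 + (1 / Sk κ₁ (x 0) ^ 2) *
    (β₁ / Ck κ₂ (x 1) ^ 2 + β₂ / (Sk κ₂ (x 1) ^ 2 * Real.cos (x 2) ^ 2)
      + β₃ / (Sk κ₂ (x 1) ^ 2 * Real.sin (x 2) ^ 2))

/-- Integral I₀₁ of H^SW. -/
def I01 (κ₁ κ₂ β₀ β₁ : ℝ) (x : Pt) : ℝ :=
  J01 κ₁ κ₂ x ^ 2 + 2 * β₀ * Tk κ₁ (x 0) ^ 2 * Ck κ₂ (x 1) ^ 2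
    + 2 * β₁ / (Tk κ₁ (x 0) ^ 2 * Ck κ₂ (x 1) ^ 2)

/-- Integral I₀₂ of H^SW. -/
def I02 (κ₁ κ₂ β₀ β₂ : ℝ) (x : Pt) : ℝ :=
  J02 κ₁ κ₂ x ^ 2 + 2 * β₀ * κ₂ ^ 2 * Tk κ₁ (x 0) ^ 2 * Sk κ₂ (x 1) ^ 2 * Real.cos (x 2) ^ 2
    + 2 * β₂ * κ₂ / (Tk κ₁ (x 0) ^ 2 * Sk κ₂ (x 1) ^ 2 * Real.cos (x 2) ^ 2)

/-- Integral I₀₃ of H^SW. -/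
def I03 (κ₁ κ₂ β₀ β₃ : ℝ) (x : Pt) : ℝ :=
  J03 κ₁ κ₂ x ^ 2 + 2 * β₀ * κ₂ ^ 2 * Tk κ₁ (x 0) ^ 2 * Sk κ₂ (x 1) ^ 2 * Real.sin (x 2) ^ 2
    + 2 * β₃ * κ₂ / (Tk κ₁ (x 0) ^ 2 * Sk κ₂ (x 1) ^ 2 * Real.sin (x 2) ^ 2)

/-- Generalized Kepler–Coulomb Hamiltonian H^GKC₁ = T + U^GKC₁. -/
def HGKC1 (κ₁ κ₂ k β₂ β₃ : ℝ) (x : Pt) : ℝ :=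
  Tkin κ₁ κ₂ x - k / Tk κ₁ (x 0)
    + (1 / (Sk κ₁ (x 0) ^ 2 * Sk κ₂ (x 1) ^ 2)) *
        (β₂ / Real.cos (x 2) ^ 2 + β₃ / Real.sin (x 2) ^ 2)

/-- Generalized Kepler–Coulomb Hamiltonian H^GKC₂ = T + U^GKC₂. -/
def HGKC2 (κ₁ κ₂ k β₁ β₃ : ℝ) (x : Pt) : ℝ :=
  Tkin κ₁ κ₂ x - k / Tk κ₁ (x 0)
    + (1 / Sk κ₁ (x 0) ^ 2) *
        (β₁ / Ck κ₂ (x 1) ^ 2 + β₃ / (Sk κ₂ (x 1) ^ 2 * Real.sin (x 2) ^ 2))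

/-- Generalized Kepler–Coulomb Hamiltonian H^GKC₃ = T + U^GKC₃. -/
def HGKC3 (κ₁ κ₂ k β₁ β₂ : ℝ) (x : Pt) : ℝ :=
  Tkin κ₁ κ₂ x - k / Tk κ₁ (x 0)
    + (1 / Sk κ₁ (x 0) ^ 2) *
        (β₁ / Ck κ₂ (x 1) ^ 2 + β₂ / (Sk κ₂ (x 1) ^ 2 * Real.cos (x 2) ^ 2))

/-- The function L₁. -/
def L1 (κ₁ κ₂ k β₂ β₃ : ℝ) (x : Pt) : ℝ :=
  -(J02 κ₁ κ₂ x * J12 κ₂ x) - J03 κ₁ κ₂ x * J13 κ₂ x + k * κ₂ * Ck κ₂ (x 1)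
    - (2 * κ₂ * Ck κ₂ (x 1) / (Tk κ₁ (x 0) * Sk κ₂ (x 1) ^ 2)) *
        (β₂ / Real.cos (x 2) ^ 2 + β₃ / Real.sin (x 2) ^ 2)

/-- The function L₂. -/
def L2 (κ₁ κ₂ k β₁ β₃ : ℝ) (x : Pt) : ℝ :=
  J01 κ₁ κ₂ x * J12 κ₂ x - J03 κ₁ κ₂ x * J23 x + k * κ₂ * Sk κ₂ (x 1) * Real.cos (x 2)
    - (2 * κ₂ * Real.cos (x 2) / Tk κ₁ (x 0)) *
        (β₁ * Sk κ₂ (x 1) / Ck κ₂ (x 1) ^ 2 + β₃ / (Sk κ₂ (x 1) * Real.sin (x 2) ^ 2))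

/-- The function L₃. -/
def L3 (κ₁ κ₂ k β₁ β₂ : ℝ) (x : Pt) : ℝ :=
  J01 κ₁ κ₂ x * J13 κ₂ x + J02 κ₁ κ₂ x * J23 x + k * κ₂ * Sk κ₂ (x 1) * Real.sin (x 2)
    - (2 * κ₂ * Real.sin (x 2) / Tk κ₁ (x 0)) *
        (β₁ * Sk κ₂ (x 1) / Ck κ₂ (x 1) ^ 2 + β₂ / (Sk κ₂ (x 1) * Real.cos (x 2) ^ 2))

/-! The κ-trigonometric functions are `Cκ x = cos (c x)` and `Sκ x = sin (c x) / c` for any complex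
`c` with `c² = κ` (and `1`, `x` when `κ = 0`), so `Sκ' = Cκ`, `Cκ' = -κ Sκ` and `Cκ² + κ Sκ² = 1`.
The six generators are linear in the momenta; computing their gradients explicitly, every bracket
becomes a rational identity in `Cκ₁(r), Sκ₁(r), Cκ₂(θ), Sκ₂(θ), cos φ, sin φ` and the momenta, which
holds modulo the three Pythagorean identities. -/

lemma Ck_zero_left (x : ℝ) : Ck 0 x = 1 := by
  rw [Ck, tsum_eq_single 0 fun l hl => by simp [zero_pow hl]]
  simp

lemma Sk_zero_left (x : ℝ) : Sk 0 x = x := by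
  rw [Sk, tsum_eq_single 0 fun l hl => by simp [zero_pow hl]]
  simp

section ComplexSquareRoot

variable {κ : ℝ} {c : ℂ}

lemma ofReal_Ck (hc : c ^ 2 = κ) (x : ℝ) : (Ck κ x : ℂ) = Complex.cos (c * x) := by
  rw [Ck, Complex.ofReal_tsum, ← (Complex.hasSum_cos (c * x)).tsum_eq]
  refine tsum_congr fun l => ?_
  rw [mul_pow, pow_mul c, hc]
  push_cast
  ring

lemma ofReal_Sk (hc : c ^ 2 = κ) (hc₀ : c ≠ 0) (x : ℝ) :
    (Sk κ x : ℂ) = Complex.sin (c * x) / c := by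
  rw [Sk, Complex.ofReal_tsum, ← ((Complex.hasSum_sin (c * x)).div_const c).tsum_eq]
  refine tsum_congr fun l => ?_
  rw [mul_pow, pow_succ c, pow_mul c, hc]
  push_cast
  field_simp
  ring

end ComplexSquareRoot

lemma exists_ne_zero_sq_eq_ofReal {κ : ℝ} (hκ : κ ≠ 0) : ∃ c : ℂ, c ≠ 0 ∧ c ^ 2 = κ := by
  obtain ⟨c, hc⟩ := IsAlgClosed.exists_pow_nat_eq (κ : ℂ) two_pos
  exact ⟨c, by rintro rfl; simp_all [eq_comm], hc⟩

lemma Ck_sq_add_mul_Sk_sq (κ x : ℝ) : Ck κ x ^ 2 + κ * Sk κ x ^ 2 = 1 := by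
  rcases eq_or_ne κ 0 with rfl | hκ
  · simp [Ck_zero_left]
  obtain ⟨c, hc₀, hc⟩ := exists_ne_zero_sq_eq_ofReal hκ
  have : ((Ck κ x ^ 2 + κ * Sk κ x ^ 2 : ℝ) : ℂ) = 1 := by
    push_cast
    rw [ofReal_Ck hc, ofReal_Sk hc hc₀, ← hc, ← Complex.cos_sq_add_sin_sq (c * x)]
    field_simp
  exact_mod_cast this

lemma hasDerivAt_Sk (κ x : ℝ) : HasDerivAt (Sk κ) (Ck κ x) x := by
  rcases eq_or_ne κ 0 with rfl | hκ
  · rw [show Sk 0 = id from funext Sk_zero_left, Ck_zero_left]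
    exact hasDerivAt_id x
  obtain ⟨c, hc₀, hc⟩ := exists_ne_zero_sq_eq_ofReal hκ
  have h : HasDerivAt (fun z : ℂ => Complex.sin (c * z) / c) (Ck κ x) x := by
    refine (((hasDerivAt_id' (x : ℂ)).const_mul c).csin.div_const c).congr_deriv ?_
    rw [ofReal_Ck hc]
    field_simp
  simpa [← ofReal_Sk hc hc₀] using h.real_of_complex

lemma hasDerivAt_Ck (κ x : ℝ) : HasDerivAt (Ck κ) (-(κ * Sk κ x)) x := by
  rcases eq_or_ne κ 0 with rfl | hκ
  · rw [show Ck 0 = fun _ => 1 from funext Ck_zero_left, zero_mul, neg_zero]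
    exact hasDerivAt_const x 1
  obtain ⟨c, hc₀, hc⟩ := exists_ne_zero_sq_eq_ofReal hκ
  have h : HasDerivAt (fun z : ℂ => Complex.cos (c * z)) ((-(κ * Sk κ x) : ℝ) : ℂ) x := by
    refine ((hasDerivAt_id' (x : ℂ)).const_mul c).ccos.congr_deriv ?_
    push_cast
    rw [ofReal_Sk hc hc₀, ← hc]
    field_simp
  simpa [← ofReal_Ck hc] using h.real_of_complex

lemma hasDerivAt_inv_Tk {κ x : ℝ} (hS : Sk κ x ≠ 0) :
    HasDerivAt (fun r => (Tk κ r)⁻¹) (-(Sk κ x ^ 2)⁻¹) x := by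
  rw [show (fun r => (Tk κ r)⁻¹) = Ck κ / Sk κ from funext fun r => inv_div _ _]
  refine ((hasDerivAt_Ck κ x).div (hasDerivAt_Sk κ x) hS).congr_deriv ?_
  field_simp
  linear_combination -Ck_sq_add_mul_Sk_sq κ x

lemma hasFDerivAt_comp_apply {ι : Type*} [Fintype ι] {u : ℝ → ℝ} {u' : ℝ} {x : ι → ℝ} {k : ι}
    (hu : HasDerivAt u u' (x k)) :
    HasFDerivAt (fun y : ι → ℝ => u (y k)) (u' • ContinuousLinearMap.proj (R := ℝ) k) x :=
  hu.comp_hasFDerivAt x (hasFDerivAt_apply k x)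

section Gradients

variable {κ₁ κ₂ : ℝ} {x : Pt}

lemma grad_J01 (hS₁ : Sk κ₁ (x 0) ≠ 0) :
    grad (J01 κ₁ κ₂) x =
      ![Sk κ₂ (x 1) / Sk κ₁ (x 0) ^ 2 * x 4,
        -(κ₂ * Sk κ₂ (x 1) * x 3) - Ck κ₁ (x 0) / Sk κ₁ (x 0) * Ck κ₂ (x 1) * x 4,
        0,
        Ck κ₂ (x 1),
        -(Ck κ₁ (x 0) / Sk κ₁ (x 0) * Sk κ₂ (x 1)),
        0] := by
  have h : HasFDerivAt (fun y : Pt => Ck κ₂ (y 1) * y 3 - Sk κ₂ (y 1) * (Tk κ₁ (y 0))⁻¹ * y 4) _ x :=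
    ((hasFDerivAt_comp_apply (hasDerivAt_Ck κ₂ (x 1))).mul (hasFDerivAt_apply 3 x)).sub
      (((hasFDerivAt_comp_apply (hasDerivAt_Sk κ₂ (x 1))).mul
        (hasFDerivAt_comp_apply (hasDerivAt_inv_Tk hS₁))).mul (hasFDerivAt_apply 4 x))
  have e : J01 κ₁ κ₂ = fun y : Pt => Ck κ₂ (y 1) * y 3 - Sk κ₂ (y 1) * (Tk κ₁ (y 0))⁻¹ * y 4 := by
    funext y; simp only [J01, div_eq_mul_inv]
  ext i
  rw [grad, pd, e, h.fderiv]
  fin_cases i <;> simp [Tk] <;> ring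

lemma grad_J02 (hS₁ : Sk κ₁ (x 0) ≠ 0) (hS₂ : Sk κ₂ (x 1) ≠ 0) :
    grad (J02 κ₁ κ₂) x =
      ![-(Ck κ₂ (x 1) * Real.cos (x 2) / Sk κ₁ (x 0) ^ 2 * x 4)
          + Real.sin (x 2) / (Sk κ₁ (x 0) ^ 2 * Sk κ₂ (x 1)) * x 5,
        κ₂ * Ck κ₂ (x 1) * Real.cos (x 2) * x 3
          - κ₂ * Sk κ₂ (x 1) * Real.cos (x 2) * Ck κ₁ (x 0) / Sk κ₁ (x 0) * x 4
          + Ck κ₁ (x 0) * Ck κ₂ (x 1) * Real.sin (x 2) / (Sk κ₁ (x 0) * Sk κ₂ (x 1) ^ 2) * x 5,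
        -(κ₂ * Sk κ₂ (x 1) * Real.sin (x 2) * x 3)
          - Ck κ₁ (x 0) * Ck κ₂ (x 1) * Real.sin (x 2) / Sk κ₁ (x 0) * x 4
          - Ck κ₁ (x 0) * Real.cos (x 2) / (Sk κ₁ (x 0) * Sk κ₂ (x 1)) * x 5,
        κ₂ * Sk κ₂ (x 1) * Real.cos (x 2),
        Ck κ₁ (x 0) * Ck κ₂ (x 1) * Real.cos (x 2) / Sk κ₁ (x 0),
        -(Ck κ₁ (x 0) * Real.sin (x 2) / (Sk κ₁ (x 0) * Sk κ₂ (x 1)))] := by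
  have h : HasFDerivAt (fun y : Pt => κ₂ * Sk κ₂ (y 1) * Real.cos (y 2) * y 3
      + Ck κ₂ (y 1) * Real.cos (y 2) * (Tk κ₁ (y 0))⁻¹ * y 4
      - Real.sin (y 2) * (Tk κ₁ (y 0))⁻¹ * (Sk κ₂ (y 1))⁻¹ * y 5) _ x :=
    ((((hasFDerivAt_comp_apply ((hasDerivAt_Sk κ₂ (x 1)).const_mul κ₂)).mul
      (hasFDerivAt_comp_apply (Real.hasDerivAt_cos (x 2)))).mul (hasFDerivAt_apply 3 x)).add
    ((((hasFDerivAt_comp_apply (hasDerivAt_Ck κ₂ (x 1))).mul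
      (hasFDerivAt_comp_apply (Real.hasDerivAt_cos (x 2)))).mul
      (hasFDerivAt_comp_apply (hasDerivAt_inv_Tk hS₁))).mul (hasFDerivAt_apply 4 x))).sub
    ((((hasFDerivAt_comp_apply (Real.hasDerivAt_sin (x 2))).mul
      (hasFDerivAt_comp_apply (hasDerivAt_inv_Tk hS₁))).mul
      (hasFDerivAt_comp_apply ((hasDerivAt_Sk κ₂ (x 1)).inv hS₂))).mul (hasFDerivAt_apply 5 x))
  have e : J02 κ₁ κ₂ = fun y : Pt => κ₂ * Sk κ₂ (y 1) * Real.cos (y 2) * y 3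
      + Ck κ₂ (y 1) * Real.cos (y 2) * (Tk κ₁ (y 0))⁻¹ * y 4
      - Real.sin (y 2) * (Tk κ₁ (y 0))⁻¹ * (Sk κ₂ (y 1))⁻¹ * y 5 := by
    funext y; simp only [J02]; ring
  ext i
  rw [grad, pd, e, h.fderiv]
  fin_cases i <;> simp [Tk] <;> ring

lemma grad_J03 (hS₁ : Sk κ₁ (x 0) ≠ 0) (hS₂ : Sk κ₂ (x 1) ≠ 0) :
    grad (J03 κ₁ κ₂) x =
      ![-(Ck κ₂ (x 1) * Real.sin (x 2) / Sk κ₁ (x 0) ^ 2 * x 4)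
          - Real.cos (x 2) / (Sk κ₁ (x 0) ^ 2 * Sk κ₂ (x 1)) * x 5,
        κ₂ * Ck κ₂ (x 1) * Real.sin (x 2) * x 3
          - κ₂ * Sk κ₂ (x 1) * Real.sin (x 2) * Ck κ₁ (x 0) / Sk κ₁ (x 0) * x 4
          - Ck κ₁ (x 0) * Ck κ₂ (x 1) * Real.cos (x 2) / (Sk κ₁ (x 0) * Sk κ₂ (x 1) ^ 2) * x 5,
        κ₂ * Sk κ₂ (x 1) * Real.cos (x 2) * x 3
          + Ck κ₁ (x 0) * Ck κ₂ (x 1) * Real.cos (x 2) / Sk κ₁ (x 0) * x 4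
          - Ck κ₁ (x 0) * Real.sin (x 2) / (Sk κ₁ (x 0) * Sk κ₂ (x 1)) * x 5,
        κ₂ * Sk κ₂ (x 1) * Real.sin (x 2),
        Ck κ₁ (x 0) * Ck κ₂ (x 1) * Real.sin (x 2) / Sk κ₁ (x 0),
        Ck κ₁ (x 0) * Real.cos (x 2) / (Sk κ₁ (x 0) * Sk κ₂ (x 1))] := by
  have h : HasFDerivAt (fun y : Pt => κ₂ * Sk κ₂ (y 1) * Real.sin (y 2) * y 3
      + Ck κ₂ (y 1) * Real.sin (y 2) * (Tk κ₁ (y 0))⁻¹ * y 4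
      + Real.cos (y 2) * (Tk κ₁ (y 0))⁻¹ * (Sk κ₂ (y 1))⁻¹ * y 5) _ x :=
    ((((hasFDerivAt_comp_apply ((hasDerivAt_Sk κ₂ (x 1)).const_mul κ₂)).mul
      (hasFDerivAt_comp_apply (Real.hasDerivAt_sin (x 2)))).mul (hasFDerivAt_apply 3 x)).add
    ((((hasFDerivAt_comp_apply (hasDerivAt_Ck κ₂ (x 1))).mul
      (hasFDerivAt_comp_apply (Real.hasDerivAt_sin (x 2)))).mul
      (hasFDerivAt_comp_apply (hasDerivAt_inv_Tk hS₁))).mul (hasFDerivAt_apply 4 x))).add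
    ((((hasFDerivAt_comp_apply (Real.hasDerivAt_cos (x 2))).mul
      (hasFDerivAt_comp_apply (hasDerivAt_inv_Tk hS₁))).mul
      (hasFDerivAt_comp_apply ((hasDerivAt_Sk κ₂ (x 1)).inv hS₂))).mul (hasFDerivAt_apply 5 x))
  have e : J03 κ₁ κ₂ = fun y : Pt => κ₂ * Sk κ₂ (y 1) * Real.sin (y 2) * y 3
      + Ck κ₂ (y 1) * Real.sin (y 2) * (Tk κ₁ (y 0))⁻¹ * y 4
      + Real.cos (y 2) * (Tk κ₁ (y 0))⁻¹ * (Sk κ₂ (y 1))⁻¹ * y 5 := by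
    funext y; simp only [J03]; ring
  ext i
  rw [grad, pd, e, h.fderiv]
  fin_cases i <;> simp [Tk] <;> ring

lemma grad_J12 (hS₂ : Sk κ₂ (x 1) ≠ 0) :
    grad (J12 κ₂) x =
      ![0,
        Real.sin (x 2) / Sk κ₂ (x 1) ^ 2 * x 5,
        -(Real.sin (x 2) * x 4) - Ck κ₂ (x 1) * Real.cos (x 2) / Sk κ₂ (x 1) * x 5,
        0,
        Real.cos (x 2),
        -(Ck κ₂ (x 1) * Real.sin (x 2) / Sk κ₂ (x 1))] := by
  have h : HasFDerivAt (fun y : Pt =>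
      Real.cos (y 2) * y 4 - Real.sin (y 2) * (Tk κ₂ (y 1))⁻¹ * y 5) _ x :=
    ((hasFDerivAt_comp_apply (Real.hasDerivAt_cos (x 2))).mul (hasFDerivAt_apply 4 x)).sub
      (((hasFDerivAt_comp_apply (Real.hasDerivAt_sin (x 2))).mul
        (hasFDerivAt_comp_apply (hasDerivAt_inv_Tk hS₂))).mul (hasFDerivAt_apply 5 x))
  have e : J12 κ₂ = fun y : Pt =>
      Real.cos (y 2) * y 4 - Real.sin (y 2) * (Tk κ₂ (y 1))⁻¹ * y 5 := by
    funext y; simp only [J12, div_eq_mul_inv]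
  ext i
  rw [grad, pd, e, h.fderiv]
  fin_cases i <;> simp [Tk] <;> ring

lemma grad_J13 (hS₂ : Sk κ₂ (x 1) ≠ 0) :
    grad (J13 κ₂) x =
      ![0,
        -(Real.cos (x 2) / Sk κ₂ (x 1) ^ 2 * x 5),
        Real.cos (x 2) * x 4 - Ck κ₂ (x 1) * Real.sin (x 2) / Sk κ₂ (x 1) * x 5,
        0,
        Real.sin (x 2),
        Ck κ₂ (x 1) * Real.cos (x 2) / Sk κ₂ (x 1)] := by
  have h : HasFDerivAt (fun y : Pt =>
      Real.sin (y 2) * y 4 + Real.cos (y 2) * (Tk κ₂ (y 1))⁻¹ * y 5) _ x :=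
    ((hasFDerivAt_comp_apply (Real.hasDerivAt_sin (x 2))).mul (hasFDerivAt_apply 4 x)).add
      (((hasFDerivAt_comp_apply (Real.hasDerivAt_cos (x 2))).mul
        (hasFDerivAt_comp_apply (hasDerivAt_inv_Tk hS₂))).mul (hasFDerivAt_apply 5 x))
  have e : J13 κ₂ = fun y : Pt =>
      Real.sin (y 2) * y 4 + Real.cos (y 2) * (Tk κ₂ (y 1))⁻¹ * y 5 := by
    funext y; simp only [J13, div_eq_mul_inv]
  ext i
  rw [grad, pd, e, h.fderiv]
  fin_cases i <;> simp [Tk] <;> ring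

lemma grad_J23 : grad J23 x = ![0, 0, 0, 0, 0, 1] := by
  ext i
  rw [grad, pd, show J23 = fun y : Pt => y 5 from rfl, (hasFDerivAt_apply 5 x).fderiv]
  fin_cases i <;> simp

end Gradients

lemma pb_eq_grad (f g : Pt → ℝ) (x : Pt) :
    pb f g x = grad f x 0 * grad g x 3 - grad g x 0 * grad f x 3
      + (grad f x 1 * grad g x 4 - grad g x 1 * grad f x 4)
      + (grad f x 2 * grad g x 5 - grad g x 2 * grad f x 5) := by
  rw [pb, Fin.sum_univ_three]
  rfl

theorem so_kappa_commutation_relations_general (κ₁ κ₂ : ℝ) :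
    ∀ x ∈ D κ₁ κ₂,
      pb (J12 κ₂) (J13 κ₂) x = κ₂ * J23 x ∧
      pb (J12 κ₂) J23 x = -J13 κ₂ x ∧
      pb (J13 κ₂) J23 x = J12 κ₂ x ∧
      pb (J12 κ₂) (J01 κ₁ κ₂) x = J02 κ₁ κ₂ x ∧
      pb (J13 κ₂) (J01 κ₁ κ₂) x = J03 κ₁ κ₂ x ∧
      pb J23 (J02 κ₁ κ₂) x = J03 κ₁ κ₂ x ∧
      pb (J12 κ₂) (J02 κ₁ κ₂) x = -(κ₂ * J01 κ₁ κ₂ x) ∧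
      pb (J13 κ₂) (J03 κ₁ κ₂) x = -(κ₂ * J01 κ₁ κ₂ x) ∧
      pb J23 (J03 κ₁ κ₂) x = -J02 κ₁ κ₂ x ∧
      pb (J01 κ₁ κ₂) (J02 κ₁ κ₂) x = κ₁ * J12 κ₂ x ∧
      pb (J01 κ₁ κ₂) (J03 κ₁ κ₂) x = κ₁ * J13 κ₂ x ∧
      pb (J02 κ₁ κ₂) (J03 κ₁ κ₂) x = κ₁ * κ₂ * J23 x ∧
      pb (J01 κ₁ κ₂) J23 x = 0 ∧
      pb (J02 κ₁ κ₂) (J13 κ₂) x = 0 ∧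
      pb (J03 κ₁ κ₂) (J12 κ₂) x = 0 := by
  rintro x ⟨hS₁, -, hS₂, -, -, -⟩
  have pyth₁ := Ck_sq_add_mul_Sk_sq κ₁ (x 0)
  have pyth₂ := Ck_sq_add_mul_Sk_sq κ₂ (x 1)
  have pyth := Real.sin_sq_add_cos_sq (x 2)
  simp only [pb_eq_grad, grad_J01 hS₁, grad_J02 hS₁ hS₂, grad_J03 hS₁ hS₂, grad_J12 hS₂,
    grad_J13 hS₂, grad_J23, Matrix.cons_val, J01, J02, J03, J12, J13, J23, Tk]
  refine ⟨?_, ?_, ?_, ?_, ?_, ?_, ?_, ?_, ?_, ?_, ?_, ?_, ?_, ?_, ?_⟩ <;> field_simp <;> grind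

/-- the geodesic polar realization satisfies the commutation
relations of so_{κ₁,κ₂}(4) with respect to the canonical Poisson bracket,
at every point of D. -/
theorem so_kappa_commutation_relations (κ₁ κ₂ : ℝ) (hκ₂ : κ₂ ≠ 0) :
    ∀ x ∈ D κ₁ κ₂,
      pb (J12 κ₂) (J13 κ₂) x = κ₂ * J23 x ∧
      pb (J12 κ₂) J23 x = -J13 κ₂ x ∧
      pb (J13 κ₂) J23 x = J12 κ₂ x ∧
      pb (J12 κ₂) (J01 κ₁ κ₂) x = J02 κ₁ κ₂ x ∧
      pb (J13 κ₂) (J01 κ₁ κ₂) x = J03 κ₁ κ₂ x ∧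
      pb J23 (J02 κ₁ κ₂) x = J03 κ₁ κ₂ x ∧
      pb (J12 κ₂) (J02 κ₁ κ₂) x = -(κ₂ * J01 κ₁ κ₂ x) ∧
      pb (J13 κ₂) (J03 κ₁ κ₂) x = -(κ₂ * J01 κ₁ κ₂ x) ∧
      pb J23 (J03 κ₁ κ₂) x = -J02 κ₁ κ₂ x ∧
      pb (J01 κ₁ κ₂) (J02 κ₁ κ₂) x = κ₁ * J12 κ₂ x ∧
      pb (J01 κ₁ κ₂) (J03 κ₁ κ₂) x = κ₁ * J13 κ₂ x ∧
      pb (J02 κ₁ κ₂) (J03 κ₁ κ₂) x = κ₁ * κ₂ * J23 x ∧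
      pb (J01 κ₁ κ₂) J23 x = 0 ∧
      pb (J02 κ₁ κ₂) (J13 κ₂) x = 0 ∧
      pb (J03 κ₁ κ₂) (J12 κ₂) x = 0 :=
  so_kappa_commutation_relations_general κ₁ κ₂

end
end Paper
end

section
/- For any smooth radial function F and any constants β₁, β₂, β₃, the four functions I₁₂, I₂₃, I₁₂₃ and H = T + U are functionally independent on D; that is, there exists a point of D at which their four gradients (vectors in ℝ⁶) are linearly independent. Consequently H is a superintegrable Hamiltonian. -/
namespace Paper
noncomputable section

lemma summable_aux (a R : ℝ) (hR : 0 ≤ R) (n₀ : ℕ) :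
    Summable (fun l : ℕ => (4:ℝ) ^ l * |a| ^ l * R ^ (2 * l) / (Nat.factorial (2*l + n₀) : ℝ)) := by
  refine Summable.of_nonneg_of_le (fun l => by positivity) (fun l => ?_)
    (Real.summable_pow_div_factorial (4 * |a| * R ^ 2))
  rw [mul_pow, mul_pow, pow_mul]
  have h : (Nat.factorial l : ℝ) ≤ (Nat.factorial (2*l + n₀) : ℝ) := by
    exact_mod_cast Nat.factorial_le (by omega)
  exact div_le_div_of_nonneg_left (by positivity) (by positivity) h

lemma abs_term_le (a y R : ℝ) (hR : 1 ≤ R) (hy : |y| ≤ R) (n m : ℕ) (hnm : n ≤ 2 * m) (c : ℝ)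
    (hc : |c| ≤ 4 ^ m) (k : ℝ) (hk : 1 ≤ k) :
    |c * ((-a) ^ m * y ^ n / k)| ≤ 4 ^ m * |a| ^ m * R ^ (2 * m) / k := by
  rw [abs_mul, abs_div, abs_mul, abs_pow, abs_pow, abs_neg,
    abs_of_nonneg (show (0:ℝ) ≤ k by linarith)]
  have h1 : |y| ^ n ≤ R ^ (2 * m) := by
    calc |y| ^ n ≤ R ^ n := by gcongr
    _ ≤ R ^ (2 * m) := pow_le_pow_right₀ hR hnm
  have h2 : |c| * (|a| ^ m * |y| ^ n) ≤ 4 ^ m * |a| ^ m * R ^ (2 * m) := by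
    calc |c| * (|a| ^ m * |y| ^ n) ≤ 4 ^ m * (|a| ^ m * R ^ (2*m)) := by gcongr
    _ = 4 ^ m * |a| ^ m * R ^ (2 * m) := by ring
  calc |c| * (|a| ^ m * |y| ^ n / k) = |c| * (|a| ^ m * |y| ^ n) / k := by ring
  _ ≤ 4 ^ m * |a| ^ m * R ^ (2 * m) / k := by gcongr

lemma nat_le_four_pow (l : ℕ) : ((2 * l + 1 : ℕ) : ℝ) ≤ 4 ^ l := by
  induction l with
  | zero => norm_num
  | succ n ih =>
    push_cast at ih ⊢
    have h4 : (1:ℝ) ≤ 4 ^ n := one_le_pow₀ (by norm_num)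
    rw [pow_succ]
    nlinarith [ih, h4]

lemma one_le_fact (n : ℕ) : (1:ℝ) ≤ (Nat.factorial n : ℝ) := by
  exact_mod_cast Nat.one_le_iff_ne_zero.mpr (Nat.factorial_ne_zero n)

lemma differentiableAt_Ck (κ x : ℝ) : DifferentiableAt ℝ (Ck κ) x := by
  have key : HasDerivAt (fun z => ∑' l : ℕ, (-κ) ^ l * z ^ (2*l) / (Nat.factorial (2*l) : ℝ))
      (∑' l : ℕ, (-κ) ^ l * (((2*l : ℕ):ℝ) * x ^ (2*l-1)) / (Nat.factorial (2*l) : ℝ)) x := by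
    refine hasDerivAt_tsum_of_isPreconnected (y₀ := (0:ℝ))
      (u := fun l : ℕ => (4:ℝ)^l * |κ|^l * (|x|+1)^(2*l) / (Nat.factorial (2*l) : ℝ))
      (summable_aux κ (|x|+1) (by positivity) 0)
      Metric.isOpen_ball (convex_ball (0:ℝ) (|x|+1)).isPreconnected
      (g' := fun l y => (-κ) ^ l * (((2*l : ℕ):ℝ) * y ^ (2*l-1)) / (Nat.factorial (2*l) : ℝ))
      (fun l y _ => ?_) (fun l y hy => ?_) ?_ ?_ ?_
    · have := ((hasDerivAt_pow (2*l) y).const_mul ((-κ)^l)).div_const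
        ((Nat.factorial (2*l) : ℝ))
      simpa using this
    · have hy' : |y| ≤ |x| + 1 := by
        have := mem_ball_zero_iff.mp hy
        rw [Real.norm_eq_abs] at this; linarith
      have hle : ((2*l : ℕ):ℝ) ≤ 4 ^ l := by
        have := nat_le_four_pow l
        push_cast at this ⊢
        linarith
      have := abs_term_le κ y (|x|+1) (by have := abs_nonneg x; linarith) hy' (2*l-1) l (by omega)
        (((2*l : ℕ):ℝ)) (by rw [abs_of_nonneg (by positivity)]; exact hle)
        ((Nat.factorial (2*l) : ℝ)) (one_le_fact _)
      calc ‖(-κ) ^ l * (((2*l : ℕ):ℝ) * y ^ (2*l-1)) / (Nat.factorial (2*l) : ℝ)‖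
          = |((2*l : ℕ):ℝ) * ((-κ) ^ l * y ^ (2*l-1) / (Nat.factorial (2*l) : ℝ))| := by
            rw [Real.norm_eq_abs]; ring_nf
      _ ≤ _ := this
    · exact mem_ball_zero_iff.mpr (by rw [Real.norm_eq_abs, abs_zero]; positivity)
    · apply summable_of_ne_finset_zero (s := {0})
      intro l hl
      simp only [Finset.mem_singleton] at hl
      simp [zero_pow (by omega : 2*l ≠ 0)]
    · exact mem_ball_zero_iff.mpr (by rw [Real.norm_eq_abs]; linarith)
  exact key.differentiableAt

lemma Sk_zero (κ : ℝ) : Sk κ 0 = 0 := by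
  unfold Sk
  have : ∀ l : ℕ, (-κ) ^ l * (0:ℝ) ^ (2*l+1) / (Nat.factorial (2*l+1) : ℝ) = 0 := by
    intro l
    simp [zero_pow (by omega : 2*l+1 ≠ 0)]
  rw [tsum_congr this, tsum_zero]

lemma Ck_zero (κ : ℝ) : Ck κ 0 = 1 := by
  unfold Ck
  rw [tsum_eq_single 0 ?_]
  · norm_num
  · intro l hl
    simp [zero_pow (by omega : 2*l ≠ 0)]


lemma exists_good (κ : ℝ) : ∃ r : ℝ, Sk κ r ≠ 0 ∧ Ck κ r ≠ 0 := by
  have hd : HasDerivAt (Sk κ) 1 0 := by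
    have := hasDerivAt_Sk κ 0
    rwa [Ck_zero] at this
  have h1 : Filter.Tendsto (slope (Sk κ) 0) (nhdsWithin 0 {(0:ℝ)}ᶜ) (nhds 1) :=
    hasDerivAt_iff_tendsto_slope.mp hd
  have ev1 : ∀ᶠ y in nhdsWithin 0 {(0:ℝ)}ᶜ, slope (Sk κ) 0 y ≠ 0 :=
    h1.eventually_ne (by norm_num)
  have ev2 : ∀ᶠ y in nhdsWithin 0 {(0:ℝ)}ᶜ, Ck κ y ≠ 0 :=
    ((differentiableAt_Ck κ 0).continuousAt.eventually_ne
      (by rw [Ck_zero]; norm_num)).filter_mono nhdsWithin_le_nhds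
  have ev3 : ∀ᶠ y in nhdsWithin 0 {(0:ℝ)}ᶜ, y ≠ 0 := by
    filter_upwards [self_mem_nhdsWithin] with y hy using hy
  obtain ⟨y, ⟨hy1, hy2⟩, hy3⟩ := ((ev1.and ev2).and ev3).exists
  refine ⟨y, ?_, hy2⟩
  intro h0
  apply hy1
  rw [slope_def_field, h0, Sk_zero]
  simp


lemma pd_eq (f : Pt → ℝ) (x : Pt) (i : Fin 6) (hf : DifferentiableAt ℝ f x) (d : ℝ)
    (h : HasDerivAt (fun t : ℝ => f (fun j => x j + t * (Pi.single i 1 : Pt) j)) d 0) :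
    pd f i x = d := by
  have hγ : HasDerivAt (fun t : ℝ => x + t • (Pi.single i 1 : Pt)) (Pi.single i 1 : Pt) 0 := by
    simpa using ((hasDerivAt_id (0:ℝ)).smul_const (Pi.single i 1 : Pt)).const_add x
  have hfx : HasFDerivAt f (fderiv ℝ f x) ((fun t : ℝ => x + t • (Pi.single i 1 : Pt)) 0) := by
    simpa using hf.hasFDerivAt
  have hcomp := hfx.comp_hasDerivAt 0 hγ
  have heq : (fun t : ℝ => f (x + t • (Pi.single i 1 : Pt)))
      = fun t : ℝ => f (fun j => x j + t * (Pi.single i 1 : Pt) j) := by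
    funext t
    congr 1
  have hcomp' : HasDerivAt (fun t : ℝ => f (fun j => x j + t * (Pi.single i 1 : Pt) j))
      ((fderiv ℝ f x) (Pi.single i 1)) 0 := heq ▸ hcomp
  exact (h.unique hcomp').symm


lemma dproj (i : Fin 6) (x : Pt) : DifferentiableAt ℝ (fun y : Pt => y i) x :=
  (ContinuousLinearMap.proj i : Pt →L[ℝ] ℝ).differentiableAt
lemma ddiv {f g : Pt → ℝ} {x : Pt} (hf : DifferentiableAt ℝ f x)
    (hg : DifferentiableAt ℝ g x) (h : g x ≠ 0) :
    DifferentiableAt ℝ (fun y => f y / g y) x := by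
  simp only [div_eq_mul_inv]; exact hf.mul (hg.inv h)
lemma dSk (κ : ℝ) (i : Fin 6) (x : Pt) : DifferentiableAt ℝ (fun y : Pt => Sk κ (y i)) x :=
  DifferentiableAt.comp (g := Sk κ) x ((hasDerivAt_Sk κ (x i)).differentiableAt) (dproj i x)
lemma dCk (κ : ℝ) (i : Fin 6) (x : Pt) : DifferentiableAt ℝ (fun y : Pt => Ck κ (y i)) x :=
  DifferentiableAt.comp (g := Ck κ) x (differentiableAt_Ck κ (x i)) (dproj i x)
lemma dTk (κ : ℝ) (i : Fin 6) (x : Pt) (hc : Ck κ (x i) ≠ 0) :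
    DifferentiableAt ℝ (fun y : Pt => Tk κ (y i)) x := by
  unfold Tk; exact ddiv (dSk κ i x) (dCk κ i x) hc
lemma dcos (x : Pt) : DifferentiableAt ℝ (fun y : Pt => Real.cos (y 2)) x :=
  (Real.differentiable_cos.differentiableAt).comp x (dproj 2 x)
lemma dsin (x : Pt) : DifferentiableAt ℝ (fun y : Pt => Real.sin (y 2)) x :=
  (Real.differentiable_sin.differentiableAt).comp x (dproj 2 x)
lemma dtan (x : Pt) (h : Real.cos (x 2) ≠ 0) :
    DifferentiableAt ℝ (fun y : Pt => Real.tan (y 2)) x :=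
  DifferentiableAt.comp (g := Real.tan) x (Real.differentiableAt_tan.mpr h) (dproj 2 x)

lemma choose_q (α C K : ℝ) (hα : α ≠ 0) :
    ∃ q : ℝ, q ≠ 0 ∧ α * (1 - q^2) + C + K * (q - 1) ≠ 0 := by
  by_cases hC : C = 0
  · by_cases hK : K = 0
    · refine ⟨2, by norm_num, fun h => hα ?_⟩
      rw [hC, hK] at h; linarith [h]
    · refine ⟨-1, by norm_num, fun h => hK ?_⟩
      rw [hC] at h; linarith [h]
  · refine ⟨1, by norm_num, fun h => hC ?_⟩
    linarith [h]


set_option maxHeartbeats 1600000 in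
/-- the four functions I₁₂, I₂₃, I₁₂₃ and H = T + U are
functionally independent on D: at some point of D their gradients in ℝ⁶ are
linearly independent. Hence H is a superintegrable Hamiltonian. -/
theorem functional_independence_of_quasi_maximal_set (κ₁ κ₂ : ℝ) (hκ₂ : κ₂ ≠ 0)
    (F : ℝ → ℝ) (hF : ContDiff ℝ (⊤ : ℕ∞) F) (β₁ β₂ β₃ : ℝ) :
    ∃ x ∈ D κ₁ κ₂, LinearIndependent ℝ
      ![grad (I12 κ₂ β₁ β₂) x,
        grad (I23 κ₂ β₂ β₃) x,
        grad (I123 κ₂ β₁ β₂ β₃) x,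
        grad (fun y => Tkin κ₁ κ₂ y + U κ₁ κ₂ F β₁ β₂ β₃ y) x] := by
  obtain ⟨r₀, hS1, hC1⟩ := exists_good κ₁
  obtain ⟨θ₀, hs, hc⟩ := exists_good κ₂
  set u : ℝ := Real.sqrt 2 / 2 with hu_def
  have hu0 : u ≠ 0 := by rw [hu_def]; positivity
  set s : ℝ := Sk κ₂ θ₀ with hs_def
  set cc : ℝ := Ck κ₂ θ₀ with hcc_def
  set tt : ℝ := Tk κ₂ θ₀ with htt_def
  have htt : tt ≠ 0 := div_ne_zero hs hc
  obtain ⟨q, hq0, hΦ⟩ := choose_q (2*u^2)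
      (-(4*β₁*κ₂^2*tt^2*u^2) + 4*β₂*κ₂/(u^2*tt^2)) (4*κ₂*(β₂-β₃)/tt^2)
      (by positivity)
  set x : Pt := ![r₀, θ₀, Real.pi/4, 1, q, tt] with hx_def
  have hx0 : x 0 = r₀ := rfl
  have hx1 : x 1 = θ₀ := rfl
  have hx2 : x 2 = Real.pi/4 := rfl
  have hx3 : x 3 = 1 := rfl
  have hx4 : x 4 = q := rfl
  have hx5 : x 5 = tt := rfl
  have hcosv : Real.cos (Real.pi/4) = u := by rw [hu_def]; exact Real.cos_pi_div_four
  have hsinv : Real.sin (Real.pi/4) = u := by rw [hu_def]; exact Real.sin_pi_div_four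
  have htanv : Real.tan (Real.pi/4) = 1 := Real.tan_pi_div_four
  have hcos0 : Real.cos (x 2) ≠ 0 := by rw [hx2, hcosv]; exact hu0
  have hsin0 : Real.sin (x 2) ≠ 0 := by rw [hx2, hsinv]; exact hu0
  have htan0 : Real.tan (x 2) ≠ 0 := by rw [hx2, htanv]; norm_num
  have hs1 : Sk κ₂ (x 1) ≠ 0 := by rw [hx1]; exact hs
  have hc1 : Ck κ₂ (x 1) ≠ 0 := by rw [hx1]; exact hc
  have htk1 : Tk κ₂ (x 1) ≠ 0 := by rw [hx1]; exact htt
  have hS0 : Sk κ₁ (x 0) ≠ 0 := by rw [hx0]; exact hS1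
  have hC0 : Ck κ₁ (x 0) ≠ 0 := by rw [hx0]; exact hC1
  have hD : x ∈ D κ₁ κ₂ := ⟨hS0, hC0, hs1, hc1, hcos0, hsin0⟩
  refine ⟨x, hD, ?_⟩
  -- differentiability
  have dI12 : DifferentiableAt ℝ (I12 κ₂ β₁ β₂) x := by
    have h1 := dTk κ₂ 1 x hc1
    have h2 := dcos x
    have h3 := dsin x
    have h4 := dproj 4 x
    have h5 := dproj 5 x
    unfold I12
    exact ((((h2.mul h4).sub ((ddiv h3 h1 htk1).mul h5)).pow 2).add
      (((differentiableAt_const _).mul (h1.pow 2)).mul (h2.pow 2))).add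
      (ddiv (differentiableAt_const _) ((h1.pow 2).mul (h2.pow 2))
        (by positivity))
  have dI23 : DifferentiableAt ℝ (I23 κ₂ β₂ β₃) x := by
    have h2 := dtan x hcos0
    have h5 := dproj 5 x
    unfold I23
    exact (((h5.pow 2).add ((differentiableAt_const _).mul (h2.pow 2)))).add
      (ddiv (differentiableAt_const _) (h2.pow 2) (by positivity))
  have dI123 : DifferentiableAt ℝ (I123 κ₂ β₁ β₂ β₃) x := by
    have hsk := dSk κ₂ 1 x
    have hck := dCk κ₂ 1 x
    have h2 := dcos x
    have h3 := dsin x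
    have h4 := dproj 4 x
    have h5 := dproj 5 x
    unfold I123
    exact (((((h4.pow 2).add (ddiv (h5.pow 2) (hsk.pow 2) (by simp only [Pi.pow_apply, Pi.mul_apply]; positivity))).add
      (ddiv (differentiableAt_const _) (hck.pow 2) (by simp only [Pi.pow_apply, Pi.mul_apply]; positivity))).add
      (ddiv (differentiableAt_const _) ((hsk.pow 2).mul (h2.pow 2))
        (by simp only [Pi.pow_apply, Pi.mul_apply]; positivity))).add
      (ddiv (differentiableAt_const _) ((hsk.pow 2).mul (h3.pow 2))
        (by positivity)))
  have dH : DifferentiableAt ℝ (fun y => Tkin κ₁ κ₂ y + U κ₁ κ₂ F β₁ β₂ β₃ y) x := by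
    have hsk0 := dSk κ₁ 0 x
    have hsk1 := dSk κ₂ 1 x
    have hck1 := dCk κ₂ 1 x
    have h2 := dcos x
    have h3 := dsin x
    have hp3 := dproj 3 x
    have hp4 := dproj 4 x
    have hp5 := dproj 5 x
    have hFd : DifferentiableAt ℝ (fun y : Pt => F (y 0)) x :=
      ((hF.differentiable (by simp)).differentiableAt).comp x (dproj 0 x)
    unfold Tkin U
    refine DifferentiableAt.add ?_ ?_
    · refine DifferentiableAt.const_mul ?_ _
      exact ((hp3.pow 2).add (ddiv (hp4.pow 2) ((differentiableAt_const _).mul (hsk0.pow 2))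
        (by simp only [Pi.pow_apply, Pi.mul_apply]; positivity))).add
        (ddiv (hp5.pow 2) (((differentiableAt_const _).mul (hsk0.pow 2)).mul (hsk1.pow 2))
          (by positivity))
    · refine hFd.add ?_
      refine DifferentiableAt.mul ?_ ?_
      · exact ddiv (differentiableAt_const _) (hsk0.pow 2) (by positivity)
      · exact ((ddiv (differentiableAt_const _) (hck1.pow 2) (by simp only [Pi.pow_apply, Pi.mul_apply]; positivity)).add
          (ddiv (differentiableAt_const _) ((hsk1.pow 2).mul (h2.pow 2))
            (by simp only [Pi.pow_apply, Pi.mul_apply]; positivity))).add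
          (ddiv (differentiableAt_const _) ((hsk1.pow 2).mul (h3.pow 2))
            (by positivity))
  -- pd values

  have p12_3 : pd (I12 κ₂ β₁ β₂) 3 x = 0 := by
    refine pd_eq _ _ _ dI12 _ ?_
    have hfun : (fun t : ℝ => I12 κ₂ β₁ β₂ (fun j => x j + t * (Pi.single 3 1 : Pt) j))
        = (fun _ : ℝ => I12 κ₂ β₁ β₂ x) := by
      funext τ
      unfold I12
      simp [Pi.single_apply]
    rw [hfun]
    exact hasDerivAt_const 0 _
  have p12_4 : pd (I12 κ₂ β₁ β₂) 4 x = 2*u^2*(q-1) := by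
    refine pd_eq _ _ _ dI12 _ ?_
    have hfun : (fun t : ℝ => I12 κ₂ β₁ β₂ (fun j => x j + t * (Pi.single 4 1 : Pt) j))
        = (fun t : ℝ => (u * (q + t) - u) ^ 2
            + (2*β₁*κ₂^2*tt^2*u^2 + 2*β₂*κ₂/(tt^2*u^2))) := by
      funext τ
      unfold I12
      simp [Pi.single_apply, hx1, hx2, hx4, hx5, hcosv, hsinv]
      rw [show Tk κ₂ θ₀ = tt from rfl]
      field_simp
      ring
    rw [hfun]
    have h := (((((hasDerivAt_id (0:ℝ)).const_add q).const_mul u).sub_const u).pow 2).add_const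
      (2*β₁*κ₂^2*tt^2*u^2 + 2*β₂*κ₂/(tt^2*u^2))
    refine h.congr_deriv (Eq.symm ?_)
    norm_num
    try ring

  have hlin : HasDerivAt (fun τ : ℝ => Real.pi/4 + τ) 1 0 := by
    simpa using (hasDerivAt_id (0:ℝ)).const_add (Real.pi/4)
  have hcosd : HasDerivAt (fun τ : ℝ => Real.cos (Real.pi/4 + τ)) (-u) 0 := by
    have := (Real.hasDerivAt_cos (Real.pi/4 + 0)).comp 0 hlin
    simpa [hsinv, Function.comp_def] using this
  have hsind : HasDerivAt (fun τ : ℝ => Real.sin (Real.pi/4 + τ)) u 0 := by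
    have := (Real.hasDerivAt_sin (Real.pi/4 + 0)).comp 0 hlin
    simpa [hcosv, Function.comp_def] using this
  have htand : HasDerivAt (fun τ : ℝ => Real.tan (Real.pi/4 + τ)) (1/u^2) 0 := by
    have hco : Real.cos (Real.pi/4 + 0) ≠ 0 := by simpa [hcosv] using hu0
    have := (Real.hasDerivAt_tan hco).comp 0 hlin
    simpa [hcosv, Function.comp_def] using this
  have p12_5 : pd (I12 κ₂ β₁ β₂) 5 x = -(2*u^2*(q-1)/tt) := by
    refine pd_eq _ _ _ dI12 _ ?_
    have hfun : (fun t : ℝ => I12 κ₂ β₁ β₂ (fun j => x j + t * (Pi.single 5 1 : Pt) j))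
        = (fun t : ℝ => (u*q - u/tt*(tt + t)) ^ 2
            + (2*β₁*κ₂^2*tt^2*u^2 + 2*β₂*κ₂/(tt^2*u^2))) := by
      funext τ
      unfold I12
      simp [Pi.single_apply, hx1, hx2, hx4, hx5, hcosv, hsinv]
      rw [show Tk κ₂ θ₀ = tt from rfl]
      field_simp
      ring
    rw [hfun]
    have h := ((((((hasDerivAt_id (0:ℝ)).const_add tt).const_mul (u/tt)).const_sub (u*q)).pow
      2)).add_const (2*β₁*κ₂^2*tt^2*u^2 + 2*β₂*κ₂/(tt^2*u^2))
    refine h.congr_deriv (Eq.symm ?_)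
    norm_num
    field_simp
  have p12_2 : pd (I12 κ₂ β₁ β₂) 2 x
      = -(2*u^2*(q-1)*(q+1)) - 4*β₁*κ₂^2*tt^2*u^2 + 4*β₂*κ₂/(u^2*tt^2) := by
    refine pd_eq _ _ _ dI12 _ ?_
    have hfun : (fun t : ℝ => I12 κ₂ β₁ β₂ (fun j => x j + t * (Pi.single 2 1 : Pt) j))
        = (fun t : ℝ => (Real.cos (Real.pi/4 + t)*q - Real.sin (Real.pi/4 + t)) ^ 2
            + 2*β₁*κ₂^2*tt^2*Real.cos (Real.pi/4 + t)^2
            + 2*β₂*κ₂/(tt^2*Real.cos (Real.pi/4 + t)^2)) := by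
      funext τ
      unfold I12
      simp [Pi.single_apply, hx1, hx2, hx4, hx5]
      try rw [show Tk κ₂ θ₀ = tt from rfl]
      try field_simp
      try ring
    rw [hfun]
    have h1 := ((hcosd.mul_const q).sub hsind).pow 2
    have h2 := (hcosd.pow 2).const_mul (2*β₁*κ₂^2*tt^2)
    have hden : (fun τ : ℝ => tt^2 * Real.cos (Real.pi/4 + τ)^2) 0 ≠ 0 := by
      simp only [add_zero, hcosv]
      positivity
    have h3 := (hasDerivAt_const (0:ℝ) (2*β₂*κ₂)).div ((hcosd.pow 2).const_mul (tt^2)) hden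
    have h := (h1.add h2).add h3
    refine h.congr_deriv (Eq.symm ?_)
    norm_num [hcosv, hsinv]
    field_simp
    ring
  have p23_3 : pd (I23 κ₂ β₂ β₃) 3 x = 0 := by
    refine pd_eq _ _ _ dI23 _ ?_
    have hfun : (fun t : ℝ => I23 κ₂ β₂ β₃ (fun j => x j + t * (Pi.single 3 1 : Pt) j))
        = (fun _ : ℝ => I23 κ₂ β₂ β₃ x) := by
      funext τ
      unfold I23
      simp [Pi.single_apply]
    rw [hfun]
    exact hasDerivAt_const 0 _
  have p23_4 : pd (I23 κ₂ β₂ β₃) 4 x = 0 := by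
    refine pd_eq _ _ _ dI23 _ ?_
    have hfun : (fun t : ℝ => I23 κ₂ β₂ β₃ (fun j => x j + t * (Pi.single 4 1 : Pt) j))
        = (fun _ : ℝ => I23 κ₂ β₂ β₃ x) := by
      funext τ
      unfold I23
      simp [Pi.single_apply]
    rw [hfun]
    exact hasDerivAt_const 0 _
  have p23_5 : pd (I23 κ₂ β₂ β₃) 5 x = 2*tt := by
    refine pd_eq _ _ _ dI23 _ ?_
    have hfun : (fun t : ℝ => I23 κ₂ β₂ β₃ (fun j => x j + t * (Pi.single 5 1 : Pt) j))
        = (fun t : ℝ => (tt + t) ^ 2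
            + (2*β₂*κ₂*Real.tan (Real.pi/4)^2 + 2*β₃*κ₂/Real.tan (Real.pi/4)^2)) := by
      funext τ
      unfold I23
      simp [Pi.single_apply, hx2, hx5]
      ring
    rw [hfun]
    have h := (((hasDerivAt_id (0:ℝ)).const_add tt).pow 2).add_const
      (2*β₂*κ₂*Real.tan (Real.pi/4)^2 + 2*β₃*κ₂/Real.tan (Real.pi/4)^2)
    refine h.congr_deriv (Eq.symm ?_)
    norm_num
    try ring
  have p23_2 : pd (I23 κ₂ β₂ β₃) 2 x = 4*κ₂*(β₂-β₃)/u^2 := by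
    refine pd_eq _ _ _ dI23 _ ?_
    have hfun : (fun t : ℝ => I23 κ₂ β₂ β₃ (fun j => x j + t * (Pi.single 2 1 : Pt) j))
        = (fun t : ℝ => tt ^ 2 + 2*β₂*κ₂*Real.tan (Real.pi/4 + t)^2
            + 2*β₃*κ₂/Real.tan (Real.pi/4 + t)^2) := by
      funext τ
      unfold I23
      simp [Pi.single_apply, hx2, hx5]
    rw [hfun]
    have h1 := (htand.pow 2).const_mul (2*β₂*κ₂)
    have hden : (fun τ : ℝ => Real.tan (Real.pi/4 + τ)^2) 0 ≠ 0 := by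
      simp only [add_zero, htanv]
      norm_num
    have h2 := (hasDerivAt_const (0:ℝ) (2*β₃*κ₂)).div (htand.pow 2) hden
    have h := ((hasDerivAt_const (0:ℝ) (tt^2)).add h1).add h2
    refine h.congr_deriv (Eq.symm ?_)
    norm_num [htanv]
    field_simp
    ring
  have p123_3 : pd (I123 κ₂ β₁ β₂ β₃) 3 x = 0 := by
    refine pd_eq _ _ _ dI123 _ ?_
    have hfun : (fun t : ℝ => I123 κ₂ β₁ β₂ β₃ (fun j => x j + t * (Pi.single 3 1 : Pt) j))
        = (fun _ : ℝ => I123 κ₂ β₁ β₂ β₃ x) := by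
      funext τ
      unfold I123
      simp [Pi.single_apply]
    rw [hfun]
    exact hasDerivAt_const 0 _
  have p123_4 : pd (I123 κ₂ β₁ β₂ β₃) 4 x = 2*q := by
    refine pd_eq _ _ _ dI123 _ ?_
    have hfun : (fun t : ℝ => I123 κ₂ β₁ β₂ β₃ (fun j => x j + t * (Pi.single 4 1 : Pt) j))
        = (fun t : ℝ => (q + t) ^ 2 + (tt^2/s^2 + 2*β₁*κ₂/cc^2
            + 2*β₂*κ₂/(s^2*u^2) + 2*β₃*κ₂/(s^2*u^2))) := by
      funext τ
      unfold I123
      simp [Pi.single_apply, hx1, hx2, hx4, hx5, hcosv, hsinv]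
      rw [show Sk κ₂ θ₀ = s from rfl, show Ck κ₂ θ₀ = cc from rfl]
      ring
    rw [hfun]
    have h := (((hasDerivAt_id (0:ℝ)).const_add q).pow 2).add_const
      (tt^2/s^2 + 2*β₁*κ₂/cc^2 + 2*β₂*κ₂/(s^2*u^2) + 2*β₃*κ₂/(s^2*u^2))
    refine h.congr_deriv (Eq.symm ?_)
    norm_num
    try ring
  have p123_5 : pd (I123 κ₂ β₁ β₂ β₃) 5 x = 2*tt/s^2 := by
    refine pd_eq _ _ _ dI123 _ ?_
    have hfun : (fun t : ℝ => I123 κ₂ β₁ β₂ β₃ (fun j => x j + t * (Pi.single 5 1 : Pt) j))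
        = (fun t : ℝ => q^2 + (tt + t) ^ 2 / s^2 + (2*β₁*κ₂/cc^2
            + 2*β₂*κ₂/(s^2*u^2) + 2*β₃*κ₂/(s^2*u^2))) := by
      funext τ
      unfold I123
      simp [Pi.single_apply, hx1, hx2, hx4, hx5, hcosv, hsinv]
      rw [show Sk κ₂ θ₀ = s from rfl, show Ck κ₂ θ₀ = cc from rfl]
      ring
    rw [hfun]
    have h := ((hasDerivAt_const (0:ℝ) (q^2)).add
      ((((hasDerivAt_id (0:ℝ)).const_add tt).pow 2).div_const (s^2))).add_const
      (2*β₁*κ₂/cc^2 + 2*β₂*κ₂/(s^2*u^2) + 2*β₃*κ₂/(s^2*u^2))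
    refine h.congr_deriv (Eq.symm ?_)
    norm_num
    try ring
  have p123_2 : pd (I123 κ₂ β₁ β₂ β₃) 2 x = 4*κ₂*(β₂-β₃)/(s^2*u^2) := by
    refine pd_eq _ _ _ dI123 _ ?_
    have hfun : (fun t : ℝ => I123 κ₂ β₁ β₂ β₃ (fun j => x j + t * (Pi.single 2 1 : Pt) j))
        = (fun t : ℝ => (q^2 + tt^2/s^2 + 2*β₁*κ₂/cc^2)
            + 2*β₂*κ₂/(s^2*Real.cos (Real.pi/4 + t)^2)
            + 2*β₃*κ₂/(s^2*Real.sin (Real.pi/4 + t)^2)) := by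
      funext τ
      unfold I123
      simp [Pi.single_apply, hx1, hx2, hx4, hx5]
      try rw [show Sk κ₂ θ₀ = s from rfl, show Ck κ₂ θ₀ = cc from rfl]
      try ring
    rw [hfun]
    have hden1 : (fun τ : ℝ => s^2 * Real.cos (Real.pi/4 + τ)^2) 0 ≠ 0 := by
      simp only [add_zero, hcosv]
      positivity
    have hden2 : (fun τ : ℝ => s^2 * Real.sin (Real.pi/4 + τ)^2) 0 ≠ 0 := by
      simp only [add_zero, hsinv]
      positivity
    have h1 := (hasDerivAt_const (0:ℝ) (2*β₂*κ₂)).div ((hcosd.pow 2).const_mul (s^2)) hden1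
    have h2 := (hasDerivAt_const (0:ℝ) (2*β₃*κ₂)).div ((hsind.pow 2).const_mul (s^2)) hden2
    have h := ((hasDerivAt_const (0:ℝ) (q^2 + tt^2/s^2 + 2*β₁*κ₂/cc^2)).add h1).add h2
    refine h.congr_deriv (Eq.symm ?_)
    norm_num [hcosv, hsinv]
    field_simp
    ring
  have pH_3 : pd (fun y => Tkin κ₁ κ₂ y + U κ₁ κ₂ F β₁ β₂ β₃ y) 3 x = 1 := by
    refine pd_eq _ _ _ dH _ ?_
    have hfun : (fun t : ℝ => (fun y => Tkin κ₁ κ₂ y + U κ₁ κ₂ F β₁ β₂ β₃ y)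
          (fun j => x j + t * (Pi.single 3 1 : Pt) j))
        = (fun t : ℝ => (1/2) * ((1 + t) ^ 2
            + (q^2/(κ₂*Sk κ₁ r₀^2) + tt^2/(κ₂*Sk κ₁ r₀^2*s^2)))
            + (F r₀ + (1/Sk κ₁ r₀^2)*(β₁/cc^2 + β₂/(s^2*u^2) + β₃/(s^2*u^2)))) := by
      funext τ
      unfold Tkin U
      simp [Pi.single_apply, hx0, hx1, hx2, hx3, hx4, hx5, hcosv, hsinv]
      try rw [show Sk κ₂ θ₀ = s from rfl, show Ck κ₂ θ₀ = cc from rfl]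
      try ring
    rw [hfun]
    have h := (((((hasDerivAt_id (0:ℝ)).const_add 1).pow 2).add_const
      (q^2/(κ₂*Sk κ₁ r₀^2) + tt^2/(κ₂*Sk κ₁ r₀^2*s^2))).const_mul (1/2)).add_const
      (F r₀ + (1/Sk κ₁ r₀^2)*(β₁/cc^2 + β₂/(s^2*u^2) + β₃/(s^2*u^2)))
    refine h.congr_deriv (Eq.symm ?_)
    norm_num
  -- linear independence
  rw [Fintype.linearIndependent_iff]
  intro g hg
  have h2eq := congrFun hg 2
  have h3eq := congrFun hg 3
  have h4eq := congrFun hg 4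
  have h5eq := congrFun hg 5
  simp only [Fin.sum_univ_four, Matrix.cons_val_zero, Matrix.cons_val_one, Matrix.head_cons,
    Matrix.cons_val_two, Matrix.tail_cons, Matrix.cons_val_three, Pi.add_apply, Pi.smul_apply,
    smul_eq_mul, Pi.zero_apply, grad] at h2eq h3eq h4eq h5eq
  rw [p12_2, p23_2, p123_2] at h2eq
  rw [p12_3, p23_3, p123_3, pH_3] at h3eq
  rw [p12_4, p23_4, p123_4] at h4eq
  rw [p12_5, p23_5, p123_5] at h5eq
  have hg3 : g 3 = 0 := by linarith
  rw [hg3] at h2eq h4eq h5eq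
  rw [zero_mul, add_zero] at h2eq h4eq h5eq
  field_simp at h2eq h4eq h5eq hΦ
  have hkey : g 0 * ((2 * u ^ 2 * (1 - q ^ 2) * (u ^ 2 * tt ^ 2) +
        (-(4 * β₁ * κ₂ ^ 2 * tt ^ 2 * u ^ 2 * (u ^ 2 * tt ^ 2)) + 4 * β₂ * κ₂)) * tt ^ 2 +
        4 * κ₂ * (β₂ - β₃) * (q - 1) * (u ^ 2 * tt ^ 2)) * (u ^ 4 * s ^ 2) = 0 := by
    linear_combination tt^2*u^4*(h2eq - 2*κ₂*(β₂-β₃)*h5eq)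
  have hus : u ^ 4 * s ^ 2 ≠ 0 := by positivity
  have hg0 : g 0 = 0 := by
    rcases mul_eq_zero.mp hkey with h | h
    · rcases mul_eq_zero.mp h with h' | h'
      · exact h'
      · exact absurd h' (by intro h0; apply hΦ; rw [div_eq_zero_iff]; left; apply mul_left_cancel₀ (pow_ne_zero 2 htt); linear_combination h0)
    · exact absurd h hus
  have hg2 : g 2 = 0 := by
    rw [hg0] at h4eq
    simp at h4eq
    rcases h4eq with h | h
    · exact absurd h hq0
    · exact h
  have hg1 : g 1 = 0 := by
    rw [hg0, hg2] at h5eq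
    simp at h5eq
    rcases h5eq with h | h | h
    · exact absurd h hs
    · exact absurd h htt
    · exact h
  intro i
  fin_cases i
  · exact hg0
  · exact hg1
  · exact hg2
  · exact hg3




end
end Paper
end
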